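/- Consider the system ṙ = Ar with A = [[λ₁,1,0],[0,λ₁,0],[0,0,λ₂]], λ₁ = λ₂ = λ < 0, and initial value with y₀ ≠ 0 and z₀ ≠ 0. Then the curvature κ(t) of the trajectory tends to +∞ as t → +∞, while the torsion τ(t) is identically 0. -/

import Mathlib

open Matrix Real Filter Topology

noncomputable def e3norm (a : Fin 3 → ℝ) : ℝ := Real.sqrt (∑ i, (a i) ^ 2)

/-- Curvature of a space curve `r`. -/
noncomputable def curv (r : ℝ → Fin 3 → ℝ) (t : ℝ) : ℝ :=
  e3norm (crossProduct (deriv r t) (deriv (deriv r) t)) / (e3norm (deriv r t)) ^ 3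

/-- Torsion of a space curve `r`. -/
noncomputable def tors (r : ℝ → Fin 3 → ℝ) (t : ℝ) : ℝ :=
  (crossProduct (deriv r t) (deriv (deriv r) t) ⬝ᵥ deriv (deriv (deriv r)) t) /
    (e3norm (crossProduct (deriv r t) (deriv (deriv r) t))) ^ 2

/-- family of curves closed under differentiation -/
noncomputable def RR (l a1 b1 a2 b2 a3 b3 : ℝ) : ℝ → Fin 3 → ℝ :=
  fun t => ![(a1 + b1 * t) * Real.exp (l * t),
             (a2 + b2 * t) * Real.exp (l * t),
             (a3 + b3 * t) * Real.exp (l * t)]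

lemma hasDerivAt_comp_aux (l a b t : ℝ) :
    HasDerivAt (fun t => (a + b * t) * Real.exp (l * t))
      ((b + l * a + l * b * t) * Real.exp (l * t)) t := by
  have h1 : HasDerivAt (fun t : ℝ => a + b * t) b t := by
    simpa using ((hasDerivAt_id t).const_mul b).const_add a
  have h2 : HasDerivAt (fun t : ℝ => Real.exp (l * t)) (l * Real.exp (l * t)) t := by
    exact ((Real.hasDerivAt_exp (l * t)).comp t ((hasDerivAt_id' t).const_mul l)).congr_deriv (by ring)
  have := h1.mul h2
  refine this.congr_deriv ?_
  ring

lemma deriv_RR (l a1 b1 a2 b2 a3 b3 : ℝ) :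
    deriv (RR l a1 b1 a2 b2 a3 b3)
      = RR l (b1 + l * a1) (l * b1) (b2 + l * a2) (l * b2) (b3 + l * a3) (l * b3) := by
  funext t
  have : HasDerivAt (RR l a1 b1 a2 b2 a3 b3)
      (RR l (b1 + l * a1) (l * b1) (b2 + l * a2) (l * b2) (b3 + l * a3) (l * b3) t) t := by
    rw [hasDerivAt_pi]
    intro i
    fin_cases i <;>
      simpa [RR] using hasDerivAt_comp_aux l _ _ t
  exact this.deriv

lemma key_tendsto {c : ℝ} (hc : c < 0) (k : ℕ) :
    Tendsto (fun t : ℝ => t ^ k * Real.exp (c * t)) atTop (𝓝 0) := by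
  have h1 : Tendsto (fun t : ℝ => (-c) * t) atTop atTop :=
    Tendsto.const_mul_atTop (by linarith) tendsto_id
  have h2 := (tendsto_pow_mul_exp_neg_atTop_nhds_zero k).comp h1
  have h3 := h2.const_mul (((-c) ^ k)⁻¹)
  rw [mul_zero] at h3
  have hne : ((-c) : ℝ) ^ k ≠ 0 := pow_ne_zero _ (by linarith)
  have heq : (fun t : ℝ => t ^ k * Real.exp (c * t))
      = fun t : ℝ => ((-c) ^ k)⁻¹ * (((-c) * t) ^ k * Real.exp (-((-c) * t))) := by
    funext t
    rw [show -(-c * t) = c * t by ring, show (-c * t) ^ k = (-c) ^ k * t ^ k by rw [mul_pow]]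
    field_simp
  rw [heq]
  exact h3

theorem curvature_torsion_jordan_block2_plus_eigen
    (l x0 y0 z0 : ℝ) (hl : l < 0) (hy : y0 ≠ 0) (hz : z0 ≠ 0)
    (r : ℝ → Fin 3 → ℝ)
    (hr : r = fun t =>
      ![(x0 + y0 * t) * Real.exp (l * t),
        y0 * Real.exp (l * t),
        z0 * Real.exp (l * t)]) :
    Tendsto (curv r) atTop atTop ∧ ∀ t : ℝ, tors r t = 0 := by
  have hr0 : r = RR l x0 y0 y0 0 z0 0 := by
    rw [hr]; funext t i; fin_cases i <;> simp [RR]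
  have h1 : deriv r = RR l (y0 + l * x0) (l * y0) (l * y0) (l * 0) (l * z0) (l * 0) := by
    rw [hr0, deriv_RR]; ring_nf
  have h2 : deriv (deriv r) = RR l (l * y0 + l * (y0 + l * x0)) (l * (l * y0))
      (l * (l * y0)) (l * (l * 0)) (l * (l * z0)) (l * (l * 0)) := by
    rw [h1, deriv_RR]; ring_nf
  have h3 : deriv (deriv (deriv r)) = RR l
      (l * (l * y0) + l * (l * y0 + l * (y0 + l * x0))) (l * (l * (l * y0)))
      (l * (l * (l * y0))) (l * (l * (l * 0))) (l * (l * (l * z0))) (l * (l * (l * 0))) := by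
    rw [h2, deriv_RR]; ring_nf
  constructor
  · -- curvature tends to infinity
    set C : ℝ := l ^ 2 * |y0| * Real.sqrt (y0 ^ 2 + z0 ^ 2) with hC
    have hl2 : (0:ℝ) < l ^ 2 := lt_of_le_of_ne (sq_nonneg l) (Ne.symm (pow_ne_zero 2 hl.ne))
    have hCpos : 0 < C := by
      have hs : 0 < Real.sqrt (y0 ^ 2 + z0 ^ 2) := Real.sqrt_pos.2 (by positivity)
      exact mul_pos (mul_pos hl2 (abs_pos.2 hy)) hs
    set D : ℝ → ℝ := fun t => ((y0 + l * x0) + l * y0 * t) ^ 2 + (l * y0) ^ 2 + (l * z0) ^ 2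
      with hD
    have hly2 : (0:ℝ) < (l * y0) ^ 2 :=
      lt_of_le_of_ne (sq_nonneg _) (Ne.symm (pow_ne_zero 2 (mul_ne_zero hl.ne hy)))
    have hDpos : ∀ t, 0 < D t := fun t => by
      have hA := sq_nonneg ((y0 + l * x0) + l * y0 * t)
      have hz2 := sq_nonneg (l * z0)
      simp only [hD]; linarith
    set g : ℝ → ℝ := fun t => Real.exp (l * t) * Real.sqrt (D t) ^ 3 with hg
    have hgpos : ∀ t, 0 < g t := fun t => by
      have h := Real.sqrt_pos.2 (hDpos t)
      positivity
    -- closed form of curvature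
    have hcurv : curv r = fun t => C / g t := by
      funext t
      have hE : (0:ℝ) < Real.exp (l * t) := Real.exp_pos _
      have hnu : e3norm (deriv r t) = Real.exp (l * t) * Real.sqrt (D t) := by
        rw [h1]
        unfold e3norm
        rw [show ∑ i, (RR l (y0 + l * x0) (l * y0) (l * y0) (l * 0) (l * z0) (l * 0) t i) ^ 2
            = Real.exp (l * t) ^ 2 * D t by
          simp [RR, Fin.sum_univ_three, hD]; ring]
        rw [Real.sqrt_mul (sq_nonneg _), Real.sqrt_sq hE.le]
      have hnw : e3norm (crossProduct (deriv r t) (deriv (deriv r) t))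
          = Real.exp (l * t) ^ 2 * C := by
        unfold e3norm
        have hC2 : C ^ 2 = l ^ 4 * y0 ^ 2 * (y0 ^ 2 + z0 ^ 2) := by
          rw [hC, mul_pow, mul_pow, sq_abs, Real.sq_sqrt (by positivity)]
          ring
        rw [show ∑ i, ((crossProduct (deriv r t) (deriv (deriv r) t)) i) ^ 2
            = (Real.exp (l * t) ^ 2) ^ 2 * C ^ 2 by
          rw [h2, h1, cross_apply, hC2]
          simp [RR, Fin.sum_univ_three]
          ring]
        rw [← mul_pow, Real.sqrt_sq (by positivity)]
      unfold curv
      rw [hnu, hnw, hg]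
      rw [mul_pow]
      have hs : (0:ℝ) < Real.sqrt (D t) := Real.sqrt_pos.2 (hDpos t)
      field_simp
    rw [hcurv]
    -- g tends to 0 from the right
    have hh : Tendsto (fun t => Real.exp ((2 * l / 3) * t) * D t) atTop (𝓝 0) := by
      have hc : 2 * l / 3 < 0 := by linarith
      have k0 := (key_tendsto hc 0).const_mul ((y0 + l * x0) ^ 2 + (l * y0) ^ 2 + (l * z0) ^ 2)
      have k1 := (key_tendsto hc 1).const_mul (2 * (y0 + l * x0) * (l * y0))
      have k2 := (key_tendsto hc 2).const_mul ((l * y0) ^ 2)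
      have := (k0.add k1).add k2
      simp only [mul_zero, add_zero] at this
      convert this using 1
      funext t
      simp only [hD]
      ring
    have hgsqrt : g = fun t => Real.sqrt (Real.exp ((2 * l / 3) * t) * D t) ^ 3 := by
      funext t
      rw [hg]
      have h4 : Real.sqrt (Real.exp ((2 * l / 3) * t) * D t)
          = Real.exp ((l / 3) * t) * Real.sqrt (D t) := by
        rw [Real.sqrt_mul (Real.exp_nonneg _), ← Real.exp_half]
        ring_nf
      rw [h4, mul_pow, ← Real.exp_nat_mul,
        show ((3:ℕ):ℝ) * (l / 3 * t) = l * t by push_cast; ring]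
    have hg0 : Tendsto g atTop (𝓝[>] 0) := by
      rw [hgsqrt]
      apply tendsto_nhdsWithin_of_tendsto_nhds_of_eventually_within
      · have := ((Real.continuous_sqrt.tendsto 0).comp hh).pow 3
        simpa using this
      · filter_upwards with t
        have := hgpos t
        rw [hgsqrt] at this
        exact this
    have hginv : Tendsto (fun t => (g t)⁻¹) atTop atTop := hg0.inv_tendsto_nhdsGT_zero
    have := hginv.const_mul_atTop hCpos
    simpa [div_eq_mul_inv] using this
  · -- torsion is identically 0
    intro t
    have hnum : (crossProduct (deriv r t) (deriv (deriv r) t)) ⬝ᵥ deriv (deriv (deriv r)) t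
        = 0 := by
      rw [h3, h2, h1, cross_apply]
      simp only [RR, dotProduct, Fin.sum_univ_three, Matrix.cons_val_zero, Matrix.cons_val_one,
        Matrix.head_cons, Matrix.cons_val_two, Matrix.tail_cons]
      ring
    unfold tors
    rw [hnum, zero_div]
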